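/- arXiv:math/9906102 — 3 statements merged into one kernel-verified Lean document; each statement's English description precedes it below -/
import Mathlib

section
/- For any positive integer r, the determinant of the r×r matrix whose (i,j) entry is the Pochhammer symbol (j-i+2)_{i-1} equals the product over i from 1 to r-1 of i!. -/
/-- The Pochhammer symbol `(x)_k = x(x+1)⋯(x+k-1)`, `(x)_0 = 1`. -/
def poch (x : ℚ) (k : ℕ) : ℚ := ∏ i ∈ Finset.range k, (x + i)

/-!
Writing `x = j + 1`, the entry `(j - i + 2)_i` is the falling factorial `x(x-1)⋯(x-i+1)`,
a monic polynomial of degree `i` in `x`. Column operations therefore reduce the transposed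
matrix to the Vandermonde matrix of the nodes `1, …, r`, whose determinant is
`∏_{a < b} (b - a) = ∏_{i < r} i!`.
-/

open Polynomial Matrix Finset

lemma poch_eq_ascPochhammer_eval (x : ℚ) (k : ℕ) : poch x k = (ascPochhammer ℚ k).eval x := by
  induction k with
  | zero => simp [poch]
  | succ k ih => rw [ascPochhammer_succ_eval, ← ih, poch, poch, prod_range_succ]

lemma poch_sub_add_one_eq_descPochhammer_eval (x : ℚ) (k : ℕ) :
    poch (x - k + 1) k = (descPochhammer ℚ k).eval x := by
  rw [descPochhammer_eval_eq_ascPochhammer, poch_eq_ascPochhammer_eval]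

lemma Matrix.det_of_descPochhammer_eval {R : Type*} [CommRing R] {n : ℕ} (v : Fin n → R) :
    (of fun i j : Fin n ↦ (descPochhammer R j).eval (v i)).det = (vandermonde v).det := by
  nontriviality R
  -- Mathlib states monicity and degree of `descPochhammer` over domains only; transport from `ℤ`.
  have monic (k : ℕ) : (descPochhammer R k).Monic := by
    rw [← descPochhammer_map (Int.castRingHom R)]
    exact (monic_descPochhammer ℤ k).map _
  have natDegree_eq (k : ℕ) : (descPochhammer R k).natDegree = k := by
    rw [← descPochhammer_map (Int.castRingHom R), (monic_descPochhammer ℤ k).natDegree_map,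
      descPochhammer_natDegree (R := ℤ)]
  exact (det_eval_matrixOfPolynomials_eq_det_vandermonde v (fun j ↦ descPochhammer R j)
    (fun j ↦ natDegree_eq j) (fun j ↦ monic j)).symm

lemma Matrix.det_vandermonde_natCast {R : Type*} [CommRing R] (n : ℕ) :
    (vandermonde fun i : Fin n ↦ ((i : ℕ) : R)).det = ∏ i ∈ range n, (i.factorial : R) := by
  cases n with
  | zero => simp
  | succ n =>
    rw [det_vandermonde_id_eq_superFactorial, ← Nat.prod_range_succ_factorial, Nat.cast_prod]

/-- Rows and columns are indexed by `Fin r` from `0`, so the `1`-based entry `(j - i + 2)_{i-1}`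
becomes `(j - i + 2)_i`. -/
theorem det_poch_matrix_general (r : ℕ) :
    Matrix.det (Matrix.of fun i j : Fin r =>
        poch (((j : ℕ) : ℚ) - ((i : ℕ) : ℚ) + 2) (i : ℕ)) =
      ∏ i ∈ Finset.range r, (Nat.factorial i : ℚ) := by
  have entry (i j : Fin r) : poch (((j : ℕ) : ℚ) - ((i : ℕ) : ℚ) + 2) i =
      (descPochhammer ℚ i).eval (((j : ℕ) : ℚ) + 1) := by
    rw [← poch_sub_add_one_eq_descPochhammer_eval]
    ring_nf
  calc _ = (of fun i j : Fin r ↦ (descPochhammer ℚ j).eval (((i : ℕ) : ℚ) + 1))ᵀ.det := by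
        congr 1
        ext i j
        exact entry i j
    _ = (vandermonde fun i : Fin r ↦ ((i : ℕ) : ℚ) + 1).det := by
        rw [det_transpose, det_of_descPochhammer_eval]
    _ = _ := by rw [det_vandermonde_add, det_vandermonde_natCast]

/-- For a positive integer `r`, the determinant of the `r × r` matrix with `(i,j)` entry
`(j - i + 2)_{i-1}` (rows and columns indexed `1, …, r`) equals `∏_{i=1}^{r-1} i!`.
Here rows/columns are indexed by `Fin r` (0-based), so the entry at `(i,j)` is
`(j - i + 2)_{i}` with the 0-based values, matching the 1-based `(j-i+2)_{i-1}`. -/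
theorem det_poch_matrix (r : ℕ) (hr : 0 < r) :
    Matrix.det (Matrix.of fun i j : Fin r =>
        poch (((j : ℕ) : ℚ) - ((i : ℕ) : ℚ) + 2) (i : ℕ)) =
      ∏ i ∈ Finset.range r, (Nat.factorial i : ℚ) :=
  det_poch_matrix_general r
end

section
/- Let a, m, n be integers with 1 ≤ n ≤ m. The determinant of the (m-n)×(m-n) submatrix of the a×a upper triangular matrix with (i,j) entry binomial(b+c+j-1, j-i), obtained by deleting the m-th row and n-th column and restricting to rows n ≤ i ≤ m-1 and columns n+1 ≤ j ≤ m, equals (b+c+n)_{m-n} / (m-n)!, where b+c is an indeterminate (i.e., the identity holds as an identity of polynomials in b+c). -/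
/-- The generalized binomial coefficient `x(x-1)⋯(x-k+1)/k!`. -/
def gchoose (x : ℚ) (k : ℕ) : ℚ := (∏ i ∈ Finset.range k, (x - i)) / (Nat.factorial k)

/-- Generalized binomial coefficient with integer lower index, zero for negative index. -/
def gchooseZ (x : ℚ) (k : ℤ) : ℚ := if k < 0 then 0 else gchoose x k.toNat

/-! ### Auxiliary lemmas -/

lemma descPoch_smeval (x : ℚ) (k : ℕ) :
    (descPochhammer ℤ k).smeval x = ∏ i ∈ Finset.range k, (x - i) := by
  induction k with
  | zero => simp [descPochhammer_zero, Polynomial.smeval_one]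
  | succ n ih =>
    rw [descPochhammer_succ_right, Polynomial.smeval_mul, ih, Finset.prod_range_succ,
      Polynomial.smeval_sub, Polynomial.smeval_X, Polynomial.smeval_natCast]
    ring

lemma gchoose_eq_choose (x : ℚ) (k : ℕ) : gchoose x k = Ring.choose x k := by
  have h := Ring.descPochhammer_eq_factorial_smul_choose x k
  rw [descPoch_smeval] at h
  rw [gchoose, h, nsmul_eq_mul]
  field_simp [Nat.factorial_ne_zero]

lemma gchoose_vandermonde (x y : ℚ) (m : ℕ) :
    gchoose (x + y) m = ∑ i ∈ Finset.range (m + 1), gchoose x i * gchoose y (m - i) := by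
  rw [gchoose_eq_choose, Ring.add_choose_eq m (Commute.all x y),
    Finset.Nat.sum_antidiagonal_eq_sum_range_succ_mk]
  simp [gchoose_eq_choose]

lemma gchoose_natCast (j k : ℕ) : gchoose (j : ℚ) k = (Nat.choose j k : ℚ) := by
  rw [gchoose_eq_choose, Ring.choose_natCast]

lemma gchooseZ_natCast (s : ℚ) (k : ℕ) : gchooseZ s (k : ℤ) = gchoose s k := by
  simp [gchooseZ]

/-- `P s m = (s)_m / m!`. -/
noncomputable def P (s : ℚ) (m : ℕ) : ℚ := poch s m / (Nat.factorial m)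

lemma P_zero (s : ℚ) : P s 0 = 1 := by simp [P, poch]

lemma P_eq (s : ℚ) (m : ℕ) : P s m = (-1)^m * gchoose (-s) m := by
  rw [P, poch, gchoose]
  rw [show ∏ i ∈ Finset.range m, (s + (i:ℚ)) = ∏ i ∈ Finset.range m, ((-1) * (-s - i)) by
    apply Finset.prod_congr rfl; intro i _; ring]
  rw [Finset.prod_mul_distrib, Finset.prod_const, Finset.card_range]
  ring

lemma gchoose_zero_left (m : ℕ) (hm : 1 ≤ m) : gchoose 0 m = 0 := by
  rw [gchoose, Finset.prod_eq_zero (Finset.mem_range.mpr hm)]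
  · simp
  · simp

/-- The key identity, a consequence of the Chu-Vandermonde identity. -/
lemma key (s : ℚ) (N : ℕ) (hN : 1 ≤ N) :
    P s N = ∑ j ∈ Finset.range N, (-1)^j * gchoose s (j+1) * P s (N-1-j) := by
  have h0 : (0:ℚ) = ∑ i ∈ Finset.range (N+1), (-1)^i * gchoose s i * P s (N-i) := by
    have hv := gchoose_vandermonde s (-s) N
    rw [add_neg_cancel, gchoose_zero_left N hN] at hv
    have : ∀ i ∈ Finset.range (N+1),
        (-1:ℚ)^i * gchoose s i * P s (N-i) = (-1)^N * (gchoose s i * gchoose (-s) (N-i)) := by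
      intro i hi
      rw [P_eq]
      have hi' : i ≤ N := Nat.lt_succ_iff.mp (Finset.mem_range.mp hi)
      have h2 : ((-1:ℚ))^i * (-1)^(N-i) = (-1)^N := by
        rw [← pow_add, Nat.add_sub_cancel' hi']
      ring_nf
      rw [show gchoose s i * gchoose (-s) (N - i) * (-1:ℚ) ^ i * (-1) ^ (N - i)
        = gchoose s i * gchoose (-s) (N - i) * ((-1:ℚ) ^ i * (-1) ^ (N - i)) by ring, h2]
    rw [Finset.sum_congr rfl this, ← Finset.mul_sum, ← hv, mul_zero]
  have h1 : ∑ i ∈ Finset.range (N+1), (-1:ℚ)^i * gchoose s i * P s (N-i) =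
      (∑ j ∈ Finset.range N, (-1)^(j+1) * gchoose s (j+1) * P s (N-(j+1))) + P s N := by
    rw [Finset.sum_range_succ']
    simp [gchoose]
  rw [h1] at h0
  have : ∀ j ∈ Finset.range N, (-1:ℚ)^(j+1) * gchoose s (j+1) * P s (N-(j+1)) =
      -((-1)^j * gchoose s (j+1) * P s (N-1-j)) := by
    intro j hj
    rw [show N - (j+1) = N-1-j by omega, pow_succ]
    ring
  rw [Finset.sum_congr rfl this, Finset.sum_neg_distrib] at h0
  linarith

/-! ### The Hessenberg-Toeplitz determinant -/

def ent (s : ℚ) (k : ℕ) (iv jv : ℕ) : ℚ :=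
  gchooseZ s ((jv:ℤ) - (iv:ℤ) + 1 + if iv = 0 then (k:ℤ) else 0)

def Bmat (s : ℚ) (k : ℕ) (N : ℕ) : Matrix (Fin N) (Fin N) ℚ :=
  Matrix.of fun i j => ent s k (i:ℕ) (j:ℕ)

lemma Bmat_apply (s : ℚ) (k N : ℕ) (i j : Fin N) : Bmat s k N i j = ent s k (i:ℕ) (j:ℕ) := rfl

lemma ent_00 (s : ℚ) (k : ℕ) (j : ℕ) : ent s k 0 j = gchoose s (k+1+j) := by
  rw [ent, if_pos rfl, show (j:ℤ) - (0:ℕ) + 1 + (k:ℤ) = ((k+1+j : ℕ) : ℤ) by push_cast; ring,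
    gchooseZ_natCast]

lemma ent_pos (s : ℚ) (k : ℕ) (i j : ℕ) (hi : i ≠ 0) :
    ent s k i j = gchooseZ s ((j:ℤ) - (i:ℤ) + 1) := by
  rw [ent, if_neg hi, add_zero]

lemma ent_zero_k (s : ℚ) (iv jv : ℕ) : ent s 0 iv jv = gchooseZ s ((jv:ℤ)-(iv:ℤ)+1) := by
  by_cases hi : iv = 0
  · subst hi
    rw [ent_00, ← gchooseZ_natCast s (0+1+jv)]
    congr 1
    push_cast
    ring
  · exact ent_pos _ _ _ _ hi

lemma detB : ∀ (N : ℕ), 1 ≤ N → ∀ (k : ℕ) (s : ℚ), (Bmat s k N).det =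
    ∑ j ∈ Finset.range N, (-1)^j * gchoose s (k+1+j) * P s (N-1-j) := by
  intro N
  induction N with
  | zero => omega
  | succ N' ih =>
    intro _ k s
    rcases Nat.eq_zero_or_pos N' with h0 | hN'
    · subst h0
      rw [Matrix.det_fin_one]
      rw [Finset.sum_range_one, Bmat_apply, show ((0 : Fin 1) : ℕ) = 0 from rfl, ent_00]
      simp [P_zero]
    · have hone : ((Fin.succ ⟨0, hN'⟩ : Fin (N'+1)) : ℕ) = 1 := rfl
      have hsuccAb : ∀ i : Fin N', (((Fin.succ ⟨0, hN'⟩ : Fin (N'+1)).succAbove i) : ℕ) =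
          if (i:ℕ) = 0 then 0 else (i:ℕ)+1 := by
        intro i
        rw [Fin.succAbove, apply_ite Fin.val, Fin.coe_castSucc, Fin.val_succ]
        have : (i.castSucc < Fin.succ ⟨0, hN'⟩) ↔ (i:ℕ) < 1 := by
          rw [Fin.lt_def, Fin.coe_castSucc, hone]
        split_ifs with h1 h2 h2 <;>
          first
            | rfl
            | omega
            | (exfalso; rw [this] at h1; omega)
      rw [Matrix.det_succ_column_zero, Fin.sum_univ_succ]
      have hrest : ∑ i : Fin N', (-1:ℚ)^((i.succ : Fin (N'+1)):ℕ) * (Bmat s k (N'+1)) i.succ 0 *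
          ((Bmat s k (N'+1)).submatrix (i.succ).succAbove Fin.succ).det =
          - ((Bmat s (k+1) N').det) := by
        rw [Finset.sum_eq_single (⟨0, hN'⟩ : Fin N')]
        · have hval : (Bmat s k (N'+1)) (Fin.succ ⟨0, hN'⟩) 0 = 1 := by
            rw [Bmat_apply, hone, show ((0 : Fin (N'+1)) : ℕ) = 0 from rfl,
              ent_pos _ _ _ _ one_ne_zero]
            norm_num [gchooseZ, gchoose]
          have hsub : (Bmat s k (N'+1)).submatrix (Fin.succ ⟨0, hN'⟩).succAbove Fin.succ =
              Bmat s (k+1) N' := by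
            ext i j
            rw [Matrix.submatrix_apply, Bmat_apply, Bmat_apply, hsuccAb i, Fin.val_succ]
            by_cases hi : (i:ℕ) = 0
            · rw [if_pos hi, hi, ent_00, ent_00]
              congr 1
              ring
            · rw [if_neg hi, ent_pos _ _ _ _ (by omega), ent_pos _ _ _ _ hi]
              congr 1
              push_cast
              ring
          rw [hval, hsub, hone]
          ring
        · intro b _ hb
          have : (Bmat s k (N'+1)) b.succ 0 = 0 := by
            rw [Bmat_apply]
            have hb' : 1 ≤ (b:ℕ) := by
              rcases Nat.eq_zero_or_pos (b:ℕ) with h | h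
              · exact absurd (Fin.ext h : b = ⟨0, hN'⟩) hb
              · exact h
            rw [Fin.val_succ, show ((0 : Fin (N'+1)) : ℕ) = 0 from rfl,
              ent_pos _ _ _ _ (by omega), gchooseZ, if_pos (by push_cast; omega)]
          rw [this]
          ring
        · intro h; exact absurd (Finset.mem_univ _) h
      rw [hrest]
      have h00 : (Bmat s k (N'+1)) 0 0 = gchoose s (k+1) := by
        rw [Bmat_apply, show ((0 : Fin (N'+1)) : ℕ) = 0 from rfl, ent_00]
      have hsub0 : (Bmat s k (N'+1)).submatrix (0 : Fin (N'+1)).succAbove Fin.succ =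
          Bmat s 0 N' := by
        ext i j
        rw [Matrix.submatrix_apply, Fin.succAbove_zero, Bmat_apply, Bmat_apply,
          Fin.val_succ, Fin.val_succ, ent_pos _ _ _ _ (by omega)]
        by_cases hi : (i:ℕ) = 0
        · rw [hi, ent_00, ← gchooseZ_natCast s (0+1+(j:ℕ))]
          congr 1
          push_cast
          ring
        · rw [ent_pos _ _ _ _ hi]
          congr 1
          push_cast
          ring
      rw [h00, hsub0, ih hN' 0 s, ih hN' (k+1) s]
      have hk0 : ∑ j ∈ Finset.range N', (-1:ℚ)^j * gchoose s (0+1+j) * P s (N'-1-j) = P s N' := by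
        rw [key s N' hN']
        exact Finset.sum_congr rfl fun j _ => by rw [show 0+1+j = j+1 by ring]
      rw [hk0, Finset.sum_range_succ']
      have : ∀ j ∈ Finset.range N', (-1:ℚ)^(j+1) * gchoose s (k+1+(j+1)) * P s (N'+1-1-(j+1)) =
          -((-1)^j * gchoose s (k+1+1+j) * P s (N'-1-j)) := by
        intro j _
        rw [show k+1+(j+1) = k+1+1+j by ring, show N'+1-1-(j+1) = N'-1-j by omega, pow_succ]
        ring
      rw [Finset.sum_congr rfl this, Finset.sum_neg_distrib]
      simp only [Fin.val_zero, pow_zero, Nat.add_sub_cancel, Nat.sub_zero, add_zero]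
      ring

/-! ### Reduction of the minor to the Toeplitz matrix -/

lemma entry_vandermonde (s : ℚ) (N : ℕ) (iv jv : ℕ) (hj : jv < N) :
    gchooseZ (s + (jv:ℚ)) ((jv:ℤ) - (iv:ℤ) + 1) =
    ∑ k ∈ Finset.range N, gchooseZ s ((k:ℤ) - (iv:ℤ) + 1) * (Nat.choose jv k : ℚ) := by
  by_cases hneg : (jv:ℤ) - (iv:ℤ) + 1 < 0
  · rw [gchooseZ, if_pos hneg]
    symm
    apply Finset.sum_eq_zero
    intro k _
    by_cases hk : (k:ℤ) - (iv:ℤ) + 1 < 0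
    · rw [gchooseZ, if_pos hk, zero_mul]
    · rw [Nat.choose_eq_zero_of_lt (by omega), Nat.cast_zero, mul_zero]
  · push_neg at hneg
    set m : ℕ := ((jv:ℤ) - (iv:ℤ) + 1).toNat with hm
    have hmz : ((jv:ℤ) - (iv:ℤ) + 1) = (m:ℤ) := by omega
    rw [hmz, gchooseZ_natCast, gchoose_vandermonde]
    have hNsucc : ∑ k ∈ Finset.range N, gchooseZ s ((k:ℤ) - (iv:ℤ) + 1) * (Nat.choose jv k : ℚ)
        = ∑ k ∈ Finset.range (N+1), gchooseZ s ((k:ℤ) - (iv:ℤ) + 1) * (Nat.choose jv k : ℚ) := by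
      rw [Finset.sum_range_succ, Nat.choose_eq_zero_of_lt hj, Nat.cast_zero, mul_zero, add_zero]
    rw [hNsucc]
    have hIco : ∑ k ∈ Finset.range (N+1), gchooseZ s ((k:ℤ) - (iv:ℤ) + 1) * (Nat.choose jv k : ℚ)
        = ∑ k ∈ Finset.Ico (iv-1) (jv+1),
            gchooseZ s ((k:ℤ) - (iv:ℤ) + 1) * (Nat.choose jv k : ℚ) := by
      symm
      apply Finset.sum_subset
      · intro x hx
        rw [Finset.mem_Ico] at hx
        rw [Finset.mem_range]
        omega
      · intro x hx hx'
        rw [Finset.mem_range] at hx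
        rw [Finset.mem_Ico] at hx'
        push_neg at hx'
        by_cases h1 : x < iv - 1
        · rw [gchooseZ, if_pos (by omega), zero_mul]
        · rw [Nat.choose_eq_zero_of_lt (by omega), Nat.cast_zero, mul_zero]
    rw [hIco]
    rcases Nat.eq_zero_or_pos iv with hiv | hiv
    · subst hiv
      have hm' : m = jv + 1 := by omega
      rw [hm', Finset.sum_range_succ']
      have h0 : gchoose s 0 * gchoose (jv:ℚ) (jv+1-0) = 0 := by
        rw [Nat.sub_zero, gchoose_natCast, Nat.choose_eq_zero_of_lt (by omega), Nat.cast_zero,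
          mul_zero]
      rw [h0, add_zero]
      rw [show Finset.Ico (0-1) (jv+1) = Finset.range (jv+1) by
        rw [Nat.zero_sub, Finset.range_eq_Ico]]
      apply Finset.sum_congr rfl
      intro k hk
      rw [Finset.mem_range] at hk
      rw [show (k:ℤ) - ((0:ℕ):ℤ) + 1 = ((k+1 : ℕ):ℤ) by push_cast; ring, gchooseZ_natCast,
        gchoose_natCast, show jv + 1 - (k+1) = jv - k by omega, Nat.choose_symm (by omega)]
    · have hlen : jv + 1 - (iv - 1) = m + 1 := by omega
      rw [Finset.sum_Ico_eq_sum_range, hlen]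
      apply Finset.sum_congr rfl
      intro k hk
      rw [Finset.mem_range] at hk
      rw [show ((iv - 1 + k : ℕ):ℤ) - (iv:ℤ) + 1 = ((k:ℕ):ℤ) by push_cast [hiv]; ring,
        gchooseZ_natCast, gchoose_natCast, show m - k = jv - (iv - 1 + k) by omega,
        ← Nat.choose_symm (by omega : iv - 1 + k ≤ jv)]

/-- The determinant of the minor, for an arbitrary size `N` and shift `s`. -/
lemma det_minor (s : ℚ) (N : ℕ) :
    Matrix.det (Matrix.of fun i j : Fin N =>
        gchooseZ (s + ((j : ℕ) : ℚ)) (((j : ℕ) : ℤ) - ((i : ℕ) : ℤ) + 1)) = P s N := by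
  rcases Nat.eq_zero_or_pos N with h0 | hN
  · subst h0
    rw [Matrix.det_fin_zero, P_zero]
  · set C : Matrix (Fin N) (Fin N) ℚ := Matrix.of fun k j => (Nat.choose (j:ℕ) (k:ℕ) : ℚ) with hC
    have hfact : (Matrix.of fun i j : Fin N =>
        gchooseZ (s + ((j : ℕ) : ℚ)) (((j : ℕ) : ℤ) - ((i : ℕ) : ℤ) + 1)) = Bmat s 0 N * C := by
      ext i j
      rw [Matrix.mul_apply, Matrix.of_apply]
      rw [entry_vandermonde s N (i:ℕ) (j:ℕ) j.isLt, Finset.sum_range]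
      apply Finset.sum_congr rfl
      intro k _
      rw [Bmat_apply, hC, Matrix.of_apply, ent_zero_k]
    rw [hfact, Matrix.det_mul]
    have hCdet : C.det = 1 := by
      have htri : C.BlockTriangular id := by
        intro k j hkj
        rw [hC, Matrix.of_apply, Nat.cast_eq_zero]
        exact Nat.choose_eq_zero_of_lt hkj
      rw [Matrix.det_of_upperTriangular htri]
      apply Finset.prod_eq_one
      intro j _
      rw [hC, Matrix.of_apply, Nat.choose_self, Nat.cast_one]
    rw [hCdet, mul_one, detB N hN 0 s]
    rw [key s N hN]
    exact Finset.sum_congr rfl fun j _ => by rw [show 0+1+j = j+1 by ring]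

/-- Let `1 ≤ n ≤ m ≤ a`.  The determinant of the `(m-n) × (m-n)` minor of the upper
triangular matrix with entries `binomial(b+c+j-1, j-i)` obtained by deleting row `m` and
column `n`, i.e. the determinant over `n ≤ i, j ≤ m-1` of `binomial(b+c+j, j-i+1)`,
equals `(b+c+n)_{m-n}/(m-n)!`, as an identity in the indeterminate `t = b + c`
(stated for every rational value `t`). -/
theorem minor_det (a m n : ℤ) (hn : 1 ≤ n) (hnm : n ≤ m) (hma : m ≤ a) (t : ℚ) :
    Matrix.det (Matrix.of fun i j : Fin (m - n).toNat =>
        gchooseZ (t + (n : ℚ) + ((j : ℕ) : ℚ)) (((j : ℕ) : ℤ) - ((i : ℕ) : ℤ) + 1)) =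
      poch (t + (n : ℚ)) (m - n).toNat / (Nat.factorial (m - n).toNat) := by
  exact det_minor (t + (n : ℚ)) (m - n).toNat
end

section
/- For positive integers a, b, c, the following product-formula identity holds: prod_{i=2}^{a} ( (b+c+i-1)! · (i-1)! ) / ( (b+i-1)! · (c+i-1)! ) = ( prod_{i=1}^{a} prod_{j=1}^{b} prod_{k=1}^{c} (i+j+k-1)/(i+j+k-2) ) · ( (1)_c / (b+1)_c ). -/
/-- MacMahon's product `∏_{i=1}^{a} ∏_{j=1}^{b} ∏_{k=1}^{c} (i+j+k-1)/(i+j+k-2)`. -/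
def macmahon (a b c : ℕ) : ℚ :=
  ∏ i ∈ Finset.range a, ∏ j ∈ Finset.range b, ∏ k ∈ Finset.range c,
    (((i : ℚ) + j + k + 2) / ((i : ℚ) + j + k + 1))

open Finset Nat

theorem Finset.prod_range_div_of_ne_zero {G₀ : Type*} [CommGroupWithZero G₀] (f : ℕ → G₀)
    (hf : ∀ i, f i ≠ 0) (n : ℕ) : ∏ i ∈ range n, f (i + 1) / f i = f n / f 0 := by
  induction n with
  | zero => simp [hf 0]
  | succ n ih => rw [prod_range_succ, ih, mul_comm, div_mul_div_cancel₀ (hf n)]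

theorem poch_natCast_add_one (n k : ℕ) : poch (n + 1) k = (n + k)! / n ! := by
  rw [eq_div_iff (by positivity), ← factorial_mul_ascFactorial, ascFactorial_eq_prod_range, poch]
  push_cast
  ring

/-- The factors are the ratios of consecutive values of `(x + k + c)! / (x + k)!`. -/
theorem prod_range_add_div_add (x c n : ℕ) :
    ∏ k ∈ range n, ((x + k + c + 1 : ℚ) / (x + k + 1)) =
      (x + n + c)! * x ! / ((x + n)! * (x + c)!) := by
  have hratio (k : ℕ) : ((x + (k + 1) + c)! / (x + (k + 1))! : ℚ) / ((x + k + c)! / (x + k)!) =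
      (x + k + c + 1) / (x + k + 1) := by
    rw [show x + (k + 1) + c = x + k + c + 1 by omega, ← add_assoc, factorial_succ,
      factorial_succ (x + k)]
    push_cast
    field_simp
  simp_rw [← hratio]
  rw [prod_range_div_of_ne_zero (fun k ↦ ((x + k + c)! / (x + k)! : ℚ)) (fun _ ↦ by positivity)]
  simp only [Nat.add_zero]
  field_simp

theorem macmahon_eq_prod_range (a b c : ℕ) :
    macmahon a b c = ∏ i ∈ range a, ((i + b + c)! * i ! : ℚ) / ((i + b)! * (i + c)!) := by
  have hinner (x : ℕ) : ∏ k ∈ range c, ((x : ℚ) + k + 2) / (x + k + 1) = (x + c + 1) / (x + 1) := by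
    have h := prod_range_add_div_add x 1 c
    rw [factorial_succ (x + c), factorial_succ x] at h
    push_cast at h
    calc _ = ∏ k ∈ range c, ((x : ℚ) + k + 1 + 1) / (x + k + 1) := by ring_nf
      _ = _ := by rw [h]; field_simp
  unfold macmahon
  refine prod_congr rfl fun i _ ↦ ?_
  rw [← prod_range_add_div_add]
  refine prod_congr rfl fun j _ ↦ ?_
  exact_mod_cast hinner (i + j)

theorem factorial_product_identity_general (a b c : ℕ) (ha : 0 < a) :
    ∏ i ∈ Finset.Icc 2 a,
        ((Nat.factorial (b + c + i - 1) : ℚ) * (Nat.factorial (i - 1) : ℚ)) /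
          ((Nat.factorial (b + i - 1) : ℚ) * (Nat.factorial (c + i - 1) : ℚ)) =
      macmahon a b c * (poch 1 c / poch ((b : ℚ) + 1) c) := by
  obtain ⟨n, rfl⟩ : ∃ n, a = n + 1 := ⟨a - 1, by omega⟩
  have hpoch_one : poch 1 c = c ! := by simpa using poch_natCast_add_one 0 c
  have hshift : ∏ i ∈ Icc 2 (n + 1),
      ((b + c + i - 1)! * (i - 1)! : ℚ) / ((b + i - 1)! * (c + i - 1)!) =
      ∏ i ∈ range n, ((i + 1 + b + c)! * (i + 1)! : ℚ) / ((i + 1 + b)! * (i + 1 + c)!) := by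
    rw [← Ico_add_one_right_eq_Icc, prod_Ico_eq_prod_range]
    refine prod_congr (by congr 1) fun i _ ↦ ?_
    congr 4 <;> omega
  rw [hshift, macmahon_eq_prod_range, prod_range_succ', hpoch_one, poch_natCast_add_one]
  field_simp
  simp only [zero_add, factorial_zero, cast_one, mul_one]
  ring

/-- For positive integers `a, b, c`:
`∏_{i=2}^{a} ((b+c+i-1)! (i-1)!)/((b+i-1)! (c+i-1)!)
  = (∏_{i,j,k} (i+j+k-1)/(i+j+k-2)) · ((1)_c/(b+1)_c)`. -/
theorem factorial_product_identity (a b c : ℕ) (ha : 0 < a) (hb : 0 < b) (hc : 0 < c) :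
    ∏ i ∈ Finset.Icc 2 a,
        ((Nat.factorial (b + c + i - 1) : ℚ) * (Nat.factorial (i - 1) : ℚ)) /
          ((Nat.factorial (b + i - 1) : ℚ) * (Nat.factorial (c + i - 1) : ℚ)) =
      macmahon a b c * (poch 1 c / poch ((b : ℚ) + 1) c) :=
  factorial_product_identity_general a b c ha
end
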